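/- (Discrete Schauder estimate, ℓ^∞ case) Let 0 < α < 1, h > 0, and u : ℤ_h → ℝ bounded with ∑_{m=0}^∞ |u((m±n)h)|/(1+m)^{1-α} < ∞ for all n ∈ ℤ. Then (δ_right)^{-α} u(nh) = h^α ∑_{m=n}^∞ Λ^{-α}(m−n) u(mh) satisfies |(δ_right)^{-α}u(nh) − (δ_right)^{-α}u(lh)| ≤ C ‖u‖_∞ h^α |n−l|^α for all n, l ∈ ℤ, with C independent of h and u. -/

import Mathlib

open scoped BigOperators

/-- `Lam α m` is the kernel `Λ^{-α}(m) = α(α+1)⋯(α+m-1)/m!`, with `Lam α 0 = 1`. -/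
noncomputable def Lam (α : ℝ) (m : ℕ) : ℝ :=
  (∏ i ∈ Finset.range m, (α + i)) / (Nat.factorial m)

/-!
The kernel `Λ^{-α}` is nonnegative and nonincreasing. Shifting the sum `∑ Λ^{-α}(j) u(n + j)` by
`k` moves the first `k` terms out, costing at most `‖u‖_∞ ∑_{j<k} Λ^{-α}(j)`, and changes the
weights of the remaining ones by `Λ^{-α}(j) - Λ^{-α}(j + k) ≥ 0`, whose sum telescopes to at most
the same quantity. Finally `Λ^{-α}(j) ≤ (j + 1)^{α-1}` (Bernoulli's inequality, inductively), and
concavity of `x ↦ x^α` gives `α (j + 1)^{α-1} ≤ (j + 1)^α - j^α`, so `∑_{j<k} Λ^{-α}(j) ≤ k^α / α`.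
-/

open Finset Real

section AntitoneKernel

variable {a : ℕ → ℝ}

theorem sum_range_sub_shift_le (ha0 : ∀ j, 0 ≤ a j) (k N : ℕ) :
    ∑ j ∈ range N, (a j - a (j + k)) ≤ ∑ j ∈ range k, a j := by
  have hle : ∑ j ∈ range N, a j ≤ ∑ j ∈ range (k + N), a j :=
    sum_le_sum_of_subset_of_nonneg (range_subset_range.2 (Nat.le_add_left N k))
      fun j _ _ => ha0 j
  rw [sum_range_add] at hle
  simp only [add_comm k] at hle
  rw [sum_sub_distrib]
  linarith

theorem sub_shift_nonneg (ha : Antitone a) (k j : ℕ) : 0 ≤ a j - a (j + k) :=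
  sub_nonneg.2 (ha (Nat.le_add_right j k))

theorem summable_sub_shift (ha : Antitone a) (ha0 : ∀ j, 0 ≤ a j) (k : ℕ) :
    Summable fun j => a j - a (j + k) :=
  summable_of_sum_range_le (sub_shift_nonneg ha k) (sum_range_sub_shift_le ha0 k)

theorem tsum_sub_shift_le (ha : Antitone a) (ha0 : ∀ j, 0 ≤ a j) (k : ℕ) :
    ∑' j, (a j - a (j + k)) ≤ ∑ j ∈ range k, a j :=
  Real.tsum_le_of_sum_range_le (sub_shift_nonneg ha k) (sum_range_sub_shift_le ha0 k)

theorem abs_tsum_mul_le {c v : ℕ → ℝ} {M : ℝ} (hc : Summable c) (hc0 : ∀ j, 0 ≤ c j)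
    (hv : ∀ j, |v j| ≤ M) : |∑' j, c j * v j| ≤ M * ∑' j, c j := by
  have hbound : ∀ j, ‖c j * v j‖ ≤ M * c j := fun j => by
    rw [Real.norm_eq_abs, abs_mul, abs_of_nonneg (hc0 j), mul_comm]
    exact mul_le_mul_of_nonneg_right (hv j) (hc0 j)
  have hsum : Summable fun j => ‖c j * v j‖ :=
    (hc.mul_left M).of_nonneg_of_le (fun _ => norm_nonneg _) hbound
  calc |∑' j, c j * v j| ≤ ∑' j, ‖c j * v j‖ := norm_tsum_le_tsum_norm hsum
    _ ≤ ∑' j, M * c j := hsum.tsum_le_tsum hbound (hc.mul_left M)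
    _ = M * ∑' j, c j := hc.tsum_mul_left M

theorem abs_sum_mul_le {c v : ℕ → ℝ} {M : ℝ} (s : Finset ℕ) (hc0 : ∀ j, 0 ≤ c j)
    (hv : ∀ j, |v j| ≤ M) : |∑ j ∈ s, c j * v j| ≤ M * ∑ j ∈ s, c j := by
  rw [mul_sum]
  refine (abs_sum_le_sum_abs _ _).trans (sum_le_sum fun j _ => ?_)
  rw [abs_mul, abs_of_nonneg (hc0 j), mul_comm]
  exact mul_le_mul_of_nonneg_right (hv j) (hc0 j)

theorem abs_tsum_mul_sub_tsum_mul_shift_le (ha : Antitone a) (ha0 : ∀ j, 0 ≤ a j)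
    {u : ℤ → ℝ} {M : ℝ} (hM : ∀ m, |u m| ≤ M)
    (hsum : ∀ n : ℤ, Summable fun j : ℕ => a j * u (n + j)) (n : ℤ) (k : ℕ) :
    |∑' j : ℕ, a j * u (n + j) - ∑' j : ℕ, a j * u (n + k + j)| ≤
      2 * M * ∑ j ∈ range k, a j := by
  have hshift : ∀ j : ℕ, a (j + k) * u (n + ↑(j + k)) = a (j + k) * u (n + k + j) := fun j => by
    push_cast; ring_nf
  have htail_sum : Summable fun j : ℕ => a (j + k) * u (n + k + j) := by
    simpa only [hshift] using (summable_nat_add_iff k).2 (hsum n)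
  have hsplit : ∑' j : ℕ, a j * u (n + j) =
      ∑ j ∈ range k, a j * u (n + j) + ∑' j : ℕ, a (j + k) * u (n + k + j) := by
    rw [← (hsum n).sum_add_tsum_nat_add k]
    simp only [hshift]
  have htail : ∑' j : ℕ, a (j + k) * u (n + k + j) - ∑' j : ℕ, a j * u (n + k + j) =
      -∑' j : ℕ, (a j - a (j + k)) * u (n + k + j) := by
    rw [← htail_sum.tsum_sub (hsum (n + k)), ← tsum_neg]
    congr 1 with j
    ring
  have hhead := abs_sum_mul_le (range k) ha0 (fun j => hM (n + j))
  have htail_le := abs_tsum_mul_le (summable_sub_shift ha ha0 k) (sub_shift_nonneg ha k)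
    (fun j => hM (n + k + j))
  have hM0 : 0 ≤ M := (abs_nonneg _).trans (hM 0)
  have hweights := mul_le_mul_of_nonneg_left (tsum_sub_shift_le ha ha0 k) hM0
  rw [hsplit, add_sub_assoc, htail]
  calc _ ≤ |∑ j ∈ range k, a j * u (n + j)| + |∑' j : ℕ, (a j - a (j + k)) * u (n + k + j)| := by
        simpa only [abs_neg] using abs_add_le _ (-∑' j : ℕ, (a j - a (j + k)) * u (n + k + j))
    _ ≤ 2 * M * ∑ j ∈ range k, a j := by linarith

end AntitoneKernel

theorem rpow_sub_one_le_add_one_rpow_sub_one_mul {x α : ℝ} (hx : 0 < x) (hα0 : 0 ≤ α)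
    (hα1 : α ≤ 1) : x ^ (α - 1) ≤ (x + 1) ^ (α - 1) * ((x + 1 - α) / x) := by
  set b := 1 + 1 / x
  have hb : 0 < b := by positivity
  have hbernoulli : b ^ (1 - α) ≤ (x + 1 - α) / x := by
    calc b ^ (1 - α) ≤ 1 + (1 - α) * (1 / x) :=
          rpow_one_add_le_one_add_mul_self (by linarith [one_div_pos.2 hx]) (by linarith)
            (by linarith)
      _ = (x + 1 - α) / x := by field_simp; ring
  have hxb : x + 1 = x * b := by simp only [b]; field_simp
  calc x ^ (α - 1) = x ^ (α - 1) * (b ^ (α - 1) * b ^ (1 - α)) := by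
        rw [← rpow_add hb]; simp
    _ ≤ x ^ (α - 1) * (b ^ (α - 1) * ((x + 1 - α) / x)) := by gcongr
    _ = (x + 1) ^ (α - 1) * ((x + 1 - α) / x) := by
        rw [hxb, mul_rpow hx.le hb.le]; ring

theorem mul_rpow_sub_one_le_rpow_sub_rpow {x α : ℝ} (hx : 1 ≤ x) (hα0 : 0 ≤ α) (hα1 : α ≤ 1) :
    α * x ^ (α - 1) ≤ x ^ α - (x - 1) ^ α := by
  have hx0 : 0 < x := by linarith
  have hbernoulli : (1 + -(1 / x)) ^ α ≤ 1 + α * -(1 / x) :=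
    rpow_one_add_le_one_add_mul_self (by linarith [(div_le_one hx0).2 hx]) hα0 hα1
  have hx1 : x - 1 = x * (1 + -(1 / x)) := by field_simp; ring
  rw [hx1, mul_rpow hx0.le (by linarith [(div_le_one hx0).2 hx]), rpow_sub_one hx0.ne']
  calc α * (x ^ α / x) = x ^ α - x ^ α * (1 + α * -(1 / x)) := by field_simp; ring
    _ ≤ x ^ α - x ^ α * (1 + -(1 / x)) ^ α := by gcongr

theorem Lam_succ (α : ℝ) (m : ℕ) : Lam α (m + 1) = Lam α m * ((α + m) / (m + 1)) := by
  rw [Lam, Lam, prod_range_succ, Nat.factorial_succ, div_mul_div_comm]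
  push_cast
  ring

theorem Lam_nonneg {α : ℝ} (hα0 : 0 ≤ α) (m : ℕ) : 0 ≤ Lam α m :=
  div_nonneg (prod_nonneg fun _ _ => by positivity) (by positivity)

theorem Lam_antitone {α : ℝ} (hα0 : 0 ≤ α) (hα1 : α ≤ 1) : Antitone (Lam α) := by
  refine antitone_nat_of_succ_le fun m => ?_
  rw [Lam_succ]
  exact mul_le_of_le_one_right (Lam_nonneg hα0 m) ((div_le_one (by positivity)).2 (by linarith))

theorem Lam_le_rpow {α : ℝ} (hα0 : 0 ≤ α) (hα1 : α ≤ 1) (m : ℕ) :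
    Lam α m ≤ ((m : ℝ) + 1) ^ (α - 1) := by
  induction m with
  | zero => simp [Lam]
  | succ m ih =>
    have hm : (0 : ℝ) < m + 1 := by positivity
    have hstep := rpow_sub_one_le_add_one_rpow_sub_one_mul hm hα0 hα1
    have hquad : (m + 1 + 1 - α) / (m + 1) * ((α + m) / (m + 1)) ≤ (1 : ℝ) := by
      rw [div_mul_div_comm, div_le_one (by positivity)]
      nlinarith [sq_nonneg (1 - α)]
    push_cast
    calc Lam α (m + 1) = Lam α m * ((α + m) / (m + 1)) := Lam_succ α m
      _ ≤ ((m : ℝ) + 1 + 1) ^ (α - 1) * ((m + 1 + 1 - α) / (m + 1)) * ((α + m) / (m + 1)) := by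
        gcongr
        exact ih.trans hstep
      _ ≤ ((m : ℝ) + 1 + 1) ^ (α - 1) := by
        rw [mul_assoc]
        exact mul_le_of_le_one_right (by positivity) hquad

theorem mul_sum_range_Lam_le {α : ℝ} (hα0 : 0 ≤ α) (hα1 : α ≤ 1) (k : ℕ) :
    α * ∑ j ∈ range k, Lam α j ≤ (k : ℝ) ^ α := by
  calc α * ∑ j ∈ range k, Lam α j ≤ ∑ j ∈ range k, α * ((j : ℝ) + 1) ^ (α - 1) := by
        rw [mul_sum]
        exact sum_le_sum fun j _ => mul_le_mul_of_nonneg_left (Lam_le_rpow hα0 hα1 j) hα0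
    _ ≤ ∑ j ∈ range k, (((j + 1 : ℕ) : ℝ) ^ α - (j : ℝ) ^ α) := by
        refine sum_le_sum fun j _ => ?_
        have := mul_rpow_sub_one_le_rpow_sub_rpow (x := (j : ℝ) + 1) (by simp) hα0 hα1
        simpa using this
    _ = (k : ℝ) ^ α - (0 : ℝ) ^ α := by
        rw [sum_range_sub (fun j : ℕ => (j : ℝ) ^ α)]; simp
    _ ≤ (k : ℝ) ^ α := sub_le_self _ (rpow_nonneg le_rfl α)

theorem summable_Lam_mul {α : ℝ} (hα0 : 0 ≤ α) (hα1 : α ≤ 1) {u : ℤ → ℝ} {n : ℤ}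
    (hs : Summable fun m : ℕ => |u (n + m)| / (1 + (m : ℝ)) ^ (1 - α)) :
    Summable fun j : ℕ => Lam α j * u (n + j) := by
  refine Summable.of_norm_bounded hs fun j => ?_
  rw [Real.norm_eq_abs, abs_mul, abs_of_nonneg (Lam_nonneg hα0 j), div_eq_inv_mul,
    ← rpow_neg (by positivity), neg_sub, add_comm 1]
  exact mul_le_mul_of_nonneg_right (Lam_le_rpow hα0 hα1 j) (abs_nonneg _)

theorem abs_tsum_Lam_mul_sub_le {α : ℝ} (hα0 : 0 < α) (hα1 : α ≤ 1) {u : ℤ → ℝ} {M : ℝ}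
    (hM : ∀ m, |u m| ≤ M) (hsum : ∀ n : ℤ, Summable fun j : ℕ => Lam α j * u (n + j))
    (n l : ℤ) :
    |∑' j : ℕ, Lam α j * u (n + j) - ∑' j : ℕ, Lam α j * u (l + j)| ≤
      2 / α * M * |(n : ℝ) - l| ^ α := by
  have hM0 : 0 ≤ M := (abs_nonneg _).trans (hM 0)
  have hshift : ∀ (m : ℤ) (k : ℕ),
      |∑' j : ℕ, Lam α j * u (m + j) - ∑' j : ℕ, Lam α j * u (m + k + j)| ≤
        2 / α * M * (k : ℝ) ^ α := fun m k => by
    calc _ ≤ 2 * M * ∑ j ∈ range k, Lam α j := abs_tsum_mul_sub_tsum_mul_shift_le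
          (Lam_antitone hα0.le hα1) (Lam_nonneg hα0.le) hM hsum m k
      _ = 2 / α * M * (α * ∑ j ∈ range k, Lam α j) := by field_simp
      _ ≤ 2 / α * M * (k : ℝ) ^ α := by gcongr; exact mul_sum_range_Lam_le hα0.le hα1 k
  rcases le_total l n with hln | hnl
  · obtain ⟨k, rfl⟩ := Int.le.dest hln
    rw [abs_sub_comm]
    simpa using hshift l k
  · obtain ⟨k, rfl⟩ := Int.le.dest hnl
    simpa using hshift n k

/-- Here `u n` is the value of `u` at `nh`. -/
theorem discrete_schauder_linfty (α : ℝ) (h0 : 0 < α) (h1 : α < 1) :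
    ∃ C > 0, ∀ (h : ℝ), 0 < h → ∀ (u : ℤ → ℝ) (M : ℝ),
      (∀ m : ℤ, |u m| ≤ M) →
      (∀ n : ℤ, Summable (fun m : ℕ => |u (n + m)| / (1 + (m : ℝ)) ^ (1 - α)) ∧
        Summable (fun m : ℕ => |u (n - m)| / (1 + (m : ℝ)) ^ (1 - α))) →
      ∀ n l : ℤ,
        |(h ^ α * ∑' j : ℕ, Lam α j * u (n + j)) -
            (h ^ α * ∑' j : ℕ, Lam α j * u (l + j))| ≤
          C * M * h ^ α * |(n : ℝ) - l| ^ α := by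
  refine ⟨2 / α, by positivity, fun h hh u M hM hs n l => ?_⟩
  have hdiff := abs_tsum_Lam_mul_sub_le h0 h1.le hM
    (fun n => summable_Lam_mul h0.le h1.le (hs n).1) n l
  rw [← mul_sub, abs_mul, abs_of_pos (rpow_pos_of_pos hh α)]
  calc _ ≤ h ^ α * (2 / α * M * |(n : ℝ) - l| ^ α) := by gcongr
    _ = 2 / α * M * h ^ α * |(n : ℝ) - l| ^ α := by ring
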